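/- For every nonnegative integer k and every integer r ≥ 1 there exist Laurent polynomials P_{k,0}(q), …, P_{k,rk}(q) with integer coefficients (i.e., elements of ℤ[q, q^{-1}]) such that, in ℚ(q), for all nonnegative integers n: ([n,k]·[n+k,k])^r = Σ_{j=0}^{r·k} q^{(r·k-j)·n}·P_{k,j}(q)·[n,j]·[n+j,j]. -/

import Mathlib

/-- The $q$-factorial `(q)_n = (1-q)(1-q²)⋯(1-qⁿ)` in `ℚ(q) = RatFunc ℚ`. -/
noncomputable def qfac (n : ℕ) : RatFunc ℚ :=
  ∏ m ∈ Finset.range n, (1 - (RatFunc.X : RatFunc ℚ) ^ (m + 1))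

/-- The Gaussian binomial coefficient `[n, k]` in `ℚ(q)`. -/
noncomputable def qbinom (n k : ℕ) : RatFunc ℚ :=
  if k ≤ n then qfac n / (qfac k * qfac (n - k)) else 0

/-- The $q$-multinomial coefficient `Mq(j; i, k)` in `ℚ(q)`: it equals
`(q)_j/((q)_{j-i}(q)_{j-k}(q)_{i+k-j})` when `max i k ≤ j ≤ i + k`, and `0`
otherwise. -/
noncomputable def qmulti (j i k : ℕ) : RatFunc ℚ :=
  if i ≤ j ∧ k ≤ j ∧ j ≤ i + k then
    qfac j / (qfac (j - i) * qfac (j - k) * qfac (i + k - j))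
  else 0

/-!
Put `x = q^n` and `G_l = x^{-l} [n,l][n+l,l]`. These satisfy the three-term recurrence
`(1 - q^{l+1})^2 G_{l+1} = (x^{-1} + q x - q^{l+1} - q^{-l}) G_l`, so multiplication by
`x^{-1} + q x` acts tridiagonally on the `G_l`. Induction on `k` along this recurrence gives the
linearization `G_j G_k = ∑_l D(j,k,l) G_l` with `D(j,k,l) = q^{-l(j+k-l)} [l,j][l,k][j+k,l]`,
a Laurent polynomial because Gaussian binomials are polynomials (q-Pascal). Iterating, `G_k^r`
is a combination of `G_0, …, G_{rk}` with integral Laurent coefficients, and multiplying by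
`x^{rk}` gives the theorem.

The recurrence for `D` is checked uniformly, boundary cases included, by writing every
q-binomial through `1/(q)_m`, extended by `0` to negative `m`.
-/

open Finset LaurentPolynomial

section Linearization

variable {R : Type*} [CommRing R]

theorem mul_eq_sum_of_threeTermRecurrence {G a b : ℕ → R} {ψ : R}
    {D : ℕ → ℕ → ℕ → R} (hG_zero : G 0 = 1)
    (hG_succ : ∀ j, a j * G (j + 1) = (ψ - b j) * G j)
    (ha : ∀ k, IsLeftRegular (a k))
    (hD_zero : ∀ j l, D j 0 l = if l = j then 1 else 0)
    (hD_top : ∀ j k l, j + k < l → D j k l = 0)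
    (hD_succ_zero : ∀ j k, a k * D j (k + 1) 0 = (b 0 - b k) * D j k 0)
    (hD_succ_succ : ∀ j k l,
      a k * D j (k + 1) (l + 1) = a l * D j k l + (b (l + 1) - b k) * D j k (l + 1))
    (j k : ℕ) : G j * G k = ∑ l ∈ range (j + k + 1), D j k l * G l := by
  induction k with
  | zero => simp [hG_zero, hD_zero]
  | succ k ih =>
    apply ha k
    calc a k * (G j * G (k + 1))
        = ∑ l ∈ range (j + k + 1), D j k l * ((ψ - b k) * G l) := by
          rw [mul_left_comm, hG_succ, mul_left_comm, ih, mul_sum]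
          simp only [mul_left_comm]
      _ = ∑ l ∈ range (j + k + 1),
            (a l * D j k l * G (l + 1) + (b l - b k) * D j k l * G l) :=
          sum_congr rfl fun l _ => by linear_combination -D j k l * hG_succ l
      _ = ∑ l ∈ range (j + k + 1), a l * D j k l * G (l + 1)
            + ∑ l ∈ range (j + k + 1 + 1), (b l - b k) * D j k l * G l := by
          rw [sum_add_distrib, sum_range_succ _ (j + k + 1), hD_top j k _ (by omega)]
          ring
      _ = ∑ l ∈ range (j + k + 1),
              (a l * D j k l + (b (l + 1) - b k) * D j k (l + 1)) * G (l + 1)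
            + (b 0 - b k) * D j k 0 * G 0 := by
          rw [sum_range_succ' (fun l => (b l - b k) * D j k l * G l), ← add_assoc,
            ← sum_add_distrib]
          simp only [add_mul]
      _ = a k * ∑ l ∈ range (j + (k + 1) + 1), D j (k + 1) l * G l := by
          rw [show j + (k + 1) + 1 = j + k + 1 + 1 by ring, mul_sum,
            sum_range_succ' (fun l => a k * (D j (k + 1) l * G l))]
          simp only [← mul_assoc, hD_succ_succ, hD_succ_zero]

/-- The coefficients of `G k ^ r` in terms of the `G j`, built from the linearization
coefficients `D j k l` of `G j * G k`. -/
def powCoeff (D : ℕ → ℕ → ℕ → R) (k : ℕ) : ℕ → ℕ → R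
  | 0, j => if j = 0 then 1 else 0
  | r + 1, l => ∑ j ∈ range (r * k + 1), powCoeff D k r j * D j k l

theorem powCoeff_mem (S : Subring R) {D : ℕ → ℕ → ℕ → R}
    (hD_mem : ∀ j k l, D j k l ∈ S) (k r j : ℕ) : powCoeff D k r j ∈ S := by
  induction r generalizing j with
  | zero => unfold powCoeff; split_ifs <;> simp [S.one_mem, S.zero_mem]
  | succ r ih => exact S.sum_mem fun i _ => S.mul_mem (ih i) (hD_mem i k j)

theorem pow_eq_sum_powCoeff {G : ℕ → R} {D : ℕ → ℕ → ℕ → R}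
    (hG_zero : G 0 = 1) (hD_top : ∀ j k l, j + k < l → D j k l = 0)
    (hmul : ∀ j k, G j * G k = ∑ l ∈ range (j + k + 1), D j k l * G l) (k r : ℕ) :
    G k ^ r = ∑ j ∈ range (r * k + 1), powCoeff D k r j * G j := by
  induction r with
  | zero => simp [powCoeff, hG_zero]
  | succ r ih =>
    have hmul' : ∀ j ∈ range (r * k + 1),
        G j * G k = ∑ l ∈ range ((r + 1) * k + 1), D j k l * G l := by
      intro j hj
      rw [hmul]
      refine sum_subset (range_subset_range.2 ?_) fun l _ hl => ?_
      · rw [mem_range] at hj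
        nlinarith
      rw [hD_top j k l (by simpa using hl), zero_mul]
    calc G k ^ (r + 1) = ∑ j ∈ range (r * k + 1), powCoeff D k r j * (G j * G k) := by
          rw [pow_succ, ih, sum_mul]
          simp only [mul_assoc]
      _ = ∑ j ∈ range (r * k + 1), ∑ l ∈ range ((r + 1) * k + 1),
            powCoeff D k r j * D j k l * G l := by
          refine sum_congr rfl fun j hj => ?_
          rw [hmul' j hj, mul_sum]
          simp only [mul_assoc]
      _ = _ := by
          rw [sum_comm]
          simp only [powCoeff, sum_mul]

end Linearization

section SchmidtProblem

local notation "q" => (RatFunc.X : RatFunc ℚ)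

lemma q_ne_zero : q ≠ 0 := RatFunc.X_ne_zero

lemma one_sub_q_pow_ne_zero {m : ℕ} (hm : m ≠ 0) : 1 - q ^ m ≠ 0 := by
  intro h
  apply Polynomial.X_pow_sub_C_ne_zero (Nat.pos_of_ne_zero hm) (1 : ℚ)
  refine (map_eq_zero_iff _ (RatFunc.algebraMap_injective ℚ)).1 ?_
  simp only [map_sub, map_pow, RatFunc.algebraMap_X, map_one]
  linear_combination -h

lemma qfac_zero : qfac 0 = 1 := prod_range_zero _

lemma qfac_succ (n : ℕ) : qfac (n + 1) = qfac n * (1 - q ^ (n + 1)) :=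
  prod_range_succ _ n

lemma qfac_ne_zero (n : ℕ) : qfac n ≠ 0 :=
  prod_ne_zero_iff.2 fun _ _ => one_sub_q_pow_ne_zero (Nat.succ_ne_zero _)

noncomputable def qfacInv (n : ℤ) : RatFunc ℚ :=
  if 0 ≤ n then (qfac n.toNat)⁻¹ else 0

lemma qfacInv_natCast (n : ℕ) : qfacInv n = (qfac n)⁻¹ := by
  simp [qfacInv]

lemma qfacInv_of_neg {n : ℤ} (hn : n < 0) : qfacInv n = 0 :=
  if_neg hn.not_ge

lemma qfacInv_sub_one (n : ℤ) : qfacInv (n - 1) = (1 - q ^ n) * qfacInv n := by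
  rcases lt_trichotomy n 0 with hn | rfl | hn
  · rw [qfacInv_of_neg hn, qfacInv_of_neg (by omega), mul_zero]
  · simp [qfacInv_of_neg]
  · lift n to ℕ using hn.le
    obtain ⟨m, rfl⟩ := Nat.exists_eq_add_one.2 (by omega : 0 < n)
    have hm := one_sub_q_pow_ne_zero (Nat.succ_ne_zero m)
    rw [show ((m + 1 : ℕ) : ℤ) - 1 = m by push_cast; ring, qfacInv_natCast, qfacInv_natCast,
      zpow_natCast, qfac_succ, mul_inv, mul_left_comm, mul_inv_cancel₀ hm, mul_one]

lemma qfacInv_natCast_eq_mul (k : ℕ) : qfacInv k = (1 - q ^ (k + 1)) * qfacInv (k + 1) := by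
  have h := qfacInv_sub_one ((k : ℤ) + 1)
  rw [add_sub_cancel_right] at h
  rw [h]
  norm_cast

lemma qbinom_eq_qfac_mul_qfacInv (n k : ℕ) :
    qbinom n k = qfac n * qfacInv k * qfacInv (n - k) := by
  unfold qbinom
  split_ifs with h
  · rw [qfacInv_natCast, ← Nat.cast_sub h, qfacInv_natCast, div_eq_mul_inv, mul_inv, mul_assoc]
  · rw [qfacInv_of_neg (n := (n : ℤ) - k) (by omega), mul_zero]

lemma qbinom_zero_right (n : ℕ) : qbinom n 0 = 1 := by
  rw [qbinom, if_pos (Nat.zero_le n), Nat.sub_zero, qfac_zero,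
    one_mul, div_self (qfac_ne_zero n)]

lemma qbinom_of_lt {n k : ℕ} (h : n < k) : qbinom n k = 0 := if_neg (by omega)

lemma qbinom_self (n : ℕ) : qbinom n n = 1 := by
  rw [qbinom, if_pos le_rfl, Nat.sub_self, qfac_zero, mul_one,
    div_self (qfac_ne_zero n)]

lemma qbinom_succ_succ (n k : ℕ) :
    qbinom (n + 1) (k + 1) = qbinom n k + q ^ (k + 1) * qbinom n (k + 1) := by
  have hnk : qfacInv (n - (k + 1)) = (1 - q ^ ((n : ℤ) - k)) * qfacInv (n - k) := by
    rw [← qfacInv_sub_one]; ring_nf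
  have hq : q ^ (k + 1) * q ^ ((n : ℤ) - k) = q ^ (n + 1) := by
    rw [zpow_sub₀ q_ne_zero, zpow_natCast, zpow_natCast, pow_succ, pow_succ]
    field_simp [q_ne_zero]
  simp only [qbinom_eq_qfac_mul_qfacInv, qfac_succ]
  push_cast
  rw [show (n + 1 - (k + 1) : ℤ) = n - k by ring, qfacInv_natCast_eq_mul k, hnk]
  linear_combination (qfac n * qfacInv (k + 1) * qfacInv (n - k)) * hq

lemma qbinom_mem (S : Subring (RatFunc ℚ)) (hq : q ∈ S) (n k : ℕ) : qbinom n k ∈ S := by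
  induction n generalizing k with
  | zero => cases k <;> simp [qbinom_zero_right, qbinom_of_lt, S.one_mem, S.zero_mem]
  | succ n ih =>
    cases k with
    | zero => simp [qbinom_zero_right, S.one_mem]
    | succ k =>
      rw [qbinom_succ_succ]
      exact S.add_mem (ih k) (S.mul_mem (S.pow_mem hq _) (ih (k + 1)))

noncomputable def linCoeff (j k l : ℕ) : RatFunc ℚ :=
  q ^ ((l : ℤ) * (l - j - k)) * (qbinom l j * qbinom l k * qbinom (j + k) l)

lemma linCoeff_eq_qfacInv (j k l : ℕ) :
    linCoeff j k l = q ^ ((l : ℤ) * (l - j - k)) * (qfac l * qfac (j + k)) *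
      (qfacInv j * qfacInv k * qfacInv (l - j) * qfacInv (l - k) * qfacInv (j + k - l)) := by
  simp only [linCoeff, qbinom_eq_qfac_mul_qfacInv, qfacInv_natCast l]
  field_simp [qfac_ne_zero]
  push_cast
  ring

lemma linCoeff_succ_succ (j k l : ℕ) :
    (1 - q ^ (k + 1)) ^ 2 * linCoeff j (k + 1) (l + 1) =
      (1 - q ^ (l + 1)) ^ 2 * linCoeff j k l +
        (q ^ (l + 1 + 1) + (q ^ (l + 1))⁻¹ - (q ^ (k + 1) + (q ^ k)⁻¹)) *
          linCoeff j k (l + 1) := by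
  have hlj : qfacInv (l - j) = (1 - q ^ ((l : ℤ) + 1 - j)) * qfacInv (l + 1 - j) := by
    rw [← qfacInv_sub_one]; ring_nf
  have hlk : qfacInv (l - k) = (1 - q ^ ((l : ℤ) + 1 - k)) * qfacInv (l + 1 - k) := by
    rw [← qfacInv_sub_one]; ring_nf
  have hjkl : qfacInv (j + k - (l + 1)) = (1 - q ^ ((j : ℤ) + k - l)) * qfacInv (j + k - l) := by
    rw [← qfacInv_sub_one]; ring_nf
  have key : (1 - q ^ (k + 1)) * q ^ ((l : ℤ) - j - k) * (1 - q ^ (j + k + 1)) *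
        (1 - q ^ ((l : ℤ) + 1 - k)) =
      (1 - q ^ (l + 1)) * (1 - q ^ ((l : ℤ) + 1 - j)) * (1 - q ^ ((l : ℤ) + 1 - k)) +
        (q ^ (l + 1 + 1) + (q ^ (l + 1))⁻¹ - (q ^ (k + 1) + (q ^ k)⁻¹)) *
          q ^ ((l : ℤ) + l + 1 - j - k) * (1 - q ^ ((j : ℤ) + k - l)) := by
    simp only [zpow_sub₀ q_ne_zero, zpow_add₀ q_ne_zero, zpow_natCast, zpow_one]
    field_simp [q_ne_zero]
    ring
  -- after expansion the three terms share one product of `qfacInv`s, with cofactors as in `key`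
  simp only [linCoeff_eq_qfacInv]
  push_cast
  rw [show (l + 1 - (k + 1) : ℤ) = l - k by ring,
    show (j + (k + 1) - (l + 1) : ℤ) = j + k - l by ring,
    show ((l : ℤ) + 1) * (l + 1 - j - (k + 1)) = l * (l - j - k) + (l - j - k) by ring,
    show ((l : ℤ) + 1) * (l + 1 - j - k) = l * (l - j - k) + (l + l + 1 - j - k) by ring,
    qfacInv_natCast_eq_mul k, hlj, hlk, hjkl, qfac_succ l, show j + (k + 1) = j + k + 1 by ring,
    qfac_succ (j + k), zpow_add₀ q_ne_zero, zpow_add₀ q_ne_zero]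
  linear_combination (q ^ ((l : ℤ) * (l - j - k)) * qfac l * qfac (j + k) * qfacInv j *
    qfacInv (k + 1) * qfacInv (l + 1 - j) * qfacInv (l + 1 - k) * qfacInv (j + k - l) *
    (1 - q ^ (k + 1)) * (1 - q ^ (l + 1))) * key

lemma linCoeff_zero_right (j l : ℕ) : linCoeff j 0 l = if l = j then 1 else 0 := by
  split_ifs with h
  · simp [h, linCoeff, qbinom_self, qbinom_zero_right]
  · rcases Nat.lt_or_gt_of_ne h with h | h <;> simp [linCoeff, qbinom_of_lt h]

lemma linCoeff_of_lt {j k l : ℕ} (h : j + k < l) : linCoeff j k l = 0 := by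
  simp [linCoeff, qbinom_of_lt h]

lemma linCoeff_succ_zero (j k : ℕ) : (1 - q ^ (k + 1)) ^ 2 * linCoeff j (k + 1) 0 =
    (q ^ (0 + 1) + (q ^ 0)⁻¹ - (q ^ (k + 1) + (q ^ k)⁻¹)) * linCoeff j k 0 := by
  cases k <;> simp [linCoeff, qbinom_of_lt]

noncomputable def schmidtTerm (n l : ℕ) : RatFunc ℚ :=
  (q ^ (n * l))⁻¹ * (qbinom n l * qbinom (n + l) l)

lemma schmidtTerm_zero_right (n : ℕ) : schmidtTerm n 0 = 1 := by
  simp [schmidtTerm, qbinom_zero_right]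

lemma qbinom_mul_qbinom_add_eq (n l : ℕ) :
    qbinom n l * qbinom (n + l) l = qfac (n + l) * qfacInv l ^ 2 * qfacInv (n - l) := by
  simp only [qbinom_eq_qfac_mul_qfacInv, Nat.cast_add, add_sub_cancel_right, qfacInv_natCast n]
  field_simp [qfac_ne_zero]

lemma schmidtTerm_succ (n l : ℕ) : (1 - q ^ (l + 1)) ^ 2 * schmidtTerm n (l + 1) =
    ((q ^ n)⁻¹ + q * q ^ n - (q ^ (l + 1) + (q ^ l)⁻¹)) * schmidtTerm n l := by
  have hnl : qfacInv (n - ↑(l + 1)) = (1 - q ^ ((n : ℤ) - l)) * qfacInv (n - l) := by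
    rw [← qfacInv_sub_one]; push_cast; ring_nf
  have key : (q ^ (n * (l + 1)))⁻¹ * (1 - q ^ (n + l + 1)) * (1 - q ^ ((n : ℤ) - l)) =
      ((q ^ n)⁻¹ + q * q ^ n - (q ^ (l + 1) + (q ^ l)⁻¹)) * (q ^ (n * l))⁻¹ := by
    simp only [zpow_sub₀ q_ne_zero, zpow_natCast, mul_add, mul_one, pow_add, pow_one]
    field_simp [q_ne_zero]
    ring
  simp only [schmidtTerm, qbinom_mul_qbinom_add_eq]
  rw [hnl, show n + (l + 1) = n + l + 1 by ring, qfac_succ, qfacInv_natCast_eq_mul l]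
  push_cast
  linear_combination
    (qfac (n + l) * qfacInv (l + 1) ^ 2 * qfacInv (n - l) * (1 - q ^ (l + 1)) ^ 2) * key

lemma schmidtTerm_mul (n j k : ℕ) : schmidtTerm n j * schmidtTerm n k =
    ∑ l ∈ range (j + k + 1), linCoeff j k l * schmidtTerm n l :=
  mul_eq_sum_of_threeTermRecurrence (schmidtTerm_zero_right n) (schmidtTerm_succ n)
    (fun k => IsRegular.left (IsRegular.of_ne_zero (pow_ne_zero 2
      (one_sub_q_pow_ne_zero (Nat.succ_ne_zero k)))))
    linCoeff_zero_right (fun _ _ _ => linCoeff_of_lt) linCoeff_succ_zero linCoeff_succ_succ j k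

noncomputable def evalLaurent : ℤ[T;T⁻¹] →+* RatFunc ℚ :=
  eval₂ (Int.castRingHom _) (Units.mk0 q q_ne_zero)

lemma evalLaurent_T (e : ℤ) : evalLaurent (T e) = q ^ e := by
  simp [evalLaurent]

lemma evalLaurent_apply (p : ℤ[T;T⁻¹]) :
    evalLaurent p = ∑ e ∈ p.coeff.support, (p.coeff e : RatFunc ℚ) * q ^ e := by
  conv_lhs => rw [← AddMonoidAlgebra.sum_coeff_single p]
  rw [map_finsuppSum]
  refine sum_congr rfl fun e _ => ?_
  dsimp only
  rw [single_eq_C_mul_T, map_mul, evalLaurent_T]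
  simp [evalLaurent]

lemma linCoeff_mem_range (j k l : ℕ) : linCoeff j k l ∈ evalLaurent.range := by
  have hq : q ∈ evalLaurent.range := ⟨T 1, by simp [evalLaurent_T]⟩
  exact evalLaurent.range.mul_mem ⟨T _, evalLaurent_T _⟩
    (evalLaurent.range.mul_mem (evalLaurent.range.mul_mem (qbinom_mem _ hq _ _)
      (qbinom_mem _ hq _ _)) (qbinom_mem _ hq _ _))

lemma qbinom_mul_qbinom_add_pow_eq_sum (n k r : ℕ) :
    (qbinom n k * qbinom (n + k) k) ^ r = ∑ j ∈ range (r * k + 1),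
      q ^ ((r * k - j) * n) * powCoeff linCoeff k r j *
        qbinom n j * qbinom (n + j) j := by
  have hterm (l : ℕ) : qbinom n l * qbinom (n + l) l = q ^ (n * l) * schmidtTerm n l := by
    rw [schmidtTerm, mul_inv_cancel_left₀ (pow_ne_zero _ q_ne_zero)]
  rw [hterm, mul_pow, pow_eq_sum_powCoeff (schmidtTerm_zero_right n)
    (fun _ _ _ => linCoeff_of_lt) (schmidtTerm_mul n) k r, mul_sum]
  refine sum_congr rfl fun j hj => ?_
  have hexp : n * k * r = (r * k - j) * n + n * j := by
    zify [Nat.le_of_lt_succ (mem_range.1 hj)]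
    ring
  rw [mul_assoc _ (qbinom n j), hterm, ← pow_mul, hexp, pow_add]
  ring

end SchmidtProblem

theorem stmt_16_general (k r : ℕ) :
    ∃ coef : ℕ → (ℤ →₀ ℤ), ∀ n : ℕ,
      (qbinom n k * qbinom (n + k) k) ^ r =
        ∑ j ∈ Finset.range (r * k + 1),
          (RatFunc.X : RatFunc ℚ) ^ ((r * k - j) * n) *
            (∑ e ∈ (coef j).support,
              (coef j e : RatFunc ℚ) * (RatFunc.X : RatFunc ℚ) ^ e) *
            qbinom n j * qbinom (n + j) j := by
  choose p hp using powCoeff_mem evalLaurent.range linCoeff_mem_range k r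
  refine ⟨fun j => (p j).coeff, fun n => ?_⟩
  simp only [qbinom_mul_qbinom_add_pow_eq_sum, ← hp, evalLaurent_apply]

/-- $q$-analog of Schmidt's problem (Zudilin's question): the coefficients are
Laurent polynomials in `q` with integer coefficients, encoded as finite
`ℤ`-linear combinations of integer powers of `q` via finitely supported
coefficient functions `coef j : ℤ →₀ ℤ`. -/
theorem stmt_16 (k r : ℕ) (hr : 1 ≤ r) :
    ∃ coef : ℕ → (ℤ →₀ ℤ), ∀ n : ℕ,
      (qbinom n k * qbinom (n + k) k) ^ r =
        ∑ j ∈ Finset.range (r * k + 1),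
          (RatFunc.X : RatFunc ℚ) ^ ((r * k - j) * n) *
            (∑ e ∈ (coef j).support,
              (coef j e : RatFunc ℚ) * (RatFunc.X : RatFunc ℚ) ^ e) *
            qbinom n j * qbinom (n + j) j :=
  stmt_16_general k r
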